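/- arXiv:2605.17456 — 2 statements merged into one kernel-verified Lean document; each statement's English description precedes it below -/
import Mathlib

section
/- Greedy maximization of a monotone submodular function with U(∅) = 0 under a cardinality constraint k achieves at least a (1 - 1/e) fraction of the optimum: if S_greedy is obtained by k steps of greedily adding the element of maximum marginal gain, then U(S_greedy) ≥ (1 - (1 - 1/k)^k) · max_{|S|≤k} U(S) ≥ (1 - 1/e) · max_{|S|≤k} U(S). -/
/-!
By submodularity, the value an optimal set `T` adds to the current greedy set `S` is at most
the sum of the single-element gains `U (S ∪ {j}) - U S` over `j ∈ T`, hence at most `k` times the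
greedy gain. So each greedy step shrinks the gap `U T - U S` by a factor `1 - 1/k`, and after `k`
steps the gap is at most `(1 - 1/k)^k * U T ≤ e⁻¹ * U T`.
-/

open Finset

section Submodular

variable {V : Type*} [DecidableEq V]

theorem sub_le_sum_marginal_gain (U : Finset V → ℝ)
    (hmono : ∀ S T : Finset V, S ⊆ T → U S ≤ U T)
    (hsub : ∀ (S T : Finset V) (i : V), S ⊆ T → i ∉ T →
      U (insert i T) - U T ≤ U (insert i S) - U S)
    (S T : Finset V) :
    U (S ∪ T) - U S ≤ ∑ i ∈ T, (U (insert i S) - U S) := by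
  induction T using Finset.induction_on with
  | empty => simp
  | @insert a T ha ih =>
    rw [sum_insert ha, union_insert]
    by_cases hmem : a ∈ S ∪ T
    · rw [insert_eq_self.mpr hmem]
      linarith [hmono S (insert a S) (subset_insert a S)]
    · linarith [hsub S (S ∪ T) a subset_union_left hmem]

theorem sub_le_card_mul_greedy_gain (U : Finset V → ℝ)
    (hmono : ∀ S T : Finset V, S ⊆ T → U S ≤ U T)
    (hsub : ∀ (S T : Finset V) (i : V), S ⊆ T → i ∉ T →
      U (insert i T) - U T ≤ U (insert i S) - U S)
    {S : Finset V} {i : V}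
    (hmax : ∀ j ∉ S, U (insert j S) - U S ≤ U (insert i S) - U S) (T : Finset V) :
    U T - U S ≤ #T * (U (insert i S) - U S) := by
  have hgain : ∀ j ∈ T, U (insert j S) - U S ≤ U (insert i S) - U S := by
    intro j _
    by_cases hj : j ∈ S
    · rw [insert_eq_self.mpr hj, sub_self, sub_nonneg]
      exact hmono S (insert i S) (subset_insert i S)
    · exact hmax j hj
  calc U T - U S ≤ U (S ∪ T) - U S := by gcongr; exact hmono T (S ∪ T) subset_union_right
    _ ≤ ∑ j ∈ T, (U (insert j S) - U S) := sub_le_sum_marginal_gain U hmono hsub S T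
    _ ≤ #T * (U (insert i S) - U S) := by
      simpa only [sum_const, nsmul_eq_mul] using sum_le_sum hgain

theorem greedy_step_gap_le (U : Finset V → ℝ)
    (hmono : ∀ S T : Finset V, S ⊆ T → U S ≤ U T)
    (hsub : ∀ (S T : Finset V) (i : V), S ⊆ T → i ∉ T →
      U (insert i T) - U T ≤ U (insert i S) - U S)
    {S : Finset V} {i : V}
    (hmax : ∀ j ∉ S, U (insert j S) - U S ≤ U (insert i S) - U S)
    {k : ℕ} (hk : 0 < k) {T : Finset V} (hT : #T ≤ k) :
    U T - U (insert i S) ≤ (1 - 1 / (k : ℝ)) * (U T - U S) := by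
  have hk' : (0 : ℝ) < k := by exact_mod_cast hk
  have hgain : 0 ≤ U (insert i S) - U S := sub_nonneg.mpr (hmono S _ (subset_insert i S))
  have hbound : U T - U S ≤ k * (U (insert i S) - U S) :=
    (sub_le_card_mul_greedy_gain U hmono hsub hmax T).trans
      (by gcongr)
  rw [one_sub_div hk'.ne', div_mul_eq_mul_div, le_div_iff₀ hk']
  linarith

end Submodular

theorem greedy_submodular_guarantee_general {V : Type*} [DecidableEq V]
    (U : Finset V → ℝ) (hU0 : U ∅ = 0)
    (hmono : ∀ S T : Finset V, S ⊆ T → U S ≤ U T)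
    (hsub : ∀ (S T : Finset V) (i : V), S ⊆ T → i ∉ T →
      U (insert i T) - U T ≤ U (insert i S) - U S)
    (k : ℕ) (hk : 1 ≤ k)
    (G : ℕ → Finset V) (hG0 : G 0 = ∅)
    (hstep : ∀ n < k, ∃ i ∉ G n, G (n+1) = insert i (G n) ∧
      ∀ j ∉ G n, U (insert j (G n)) - U (G n) ≤ U (insert i (G n)) - U (G n)) :
    ∀ T : Finset V, T.card ≤ k →
      (1 - (1 - 1/(k:ℝ))^k) * U T ≤ U (G k) ∧
      (1 - Real.exp (-1)) * U T ≤ U (G k) := by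
  intro T hT
  have hratio : 0 ≤ 1 - 1 / (k : ℝ) :=
    sub_nonneg.mpr (div_le_one_of_le₀ (by exact_mod_cast hk) (Nat.cast_nonneg k))
  have hgap : U T - U (G k) ≤ (1 - 1 / (k : ℝ)) ^ k * U T := by
    simpa only [hG0, hU0, sub_zero] using
      le_geom (u := fun n ↦ U T - U (G n)) hratio k fun n hn ↦ by
        obtain ⟨i, -, hGn, hmax⟩ := hstep n hn
        simp only [hGn]
        exact greedy_step_gap_le U hmono hsub hmax hk hT
  have hexp : (1 - 1 / (k : ℝ)) ^ k ≤ Real.exp (-1) :=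
    Real.one_sub_div_pow_le_exp_neg (by exact_mod_cast hk)
  have hUT : 0 ≤ U T := hU0 ▸ hmono ∅ T (empty_subset T)
  constructor <;> nlinarith

/-- Nemhauser–Wolsey–Fisher greedy guarantee: for a monotone submodular `U` with
`U ∅ = 0`, `k` greedy steps attain at least `(1 - (1 - 1/k)^k) ≥ (1 - 1/e)` times
the optimum over sets of cardinality at most `k`. -/
theorem greedy_submodular_guarantee {V : Type*} [Fintype V] [DecidableEq V]
    (U : Finset V → ℝ) (hU0 : U ∅ = 0)
    (hmono : ∀ S T : Finset V, S ⊆ T → U S ≤ U T)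
    (hsub : ∀ (S T : Finset V) (i : V), S ⊆ T → i ∉ T →
      U (insert i T) - U T ≤ U (insert i S) - U S)
    (k : ℕ) (hk : 1 ≤ k) (hkV : k ≤ Fintype.card V)
    (G : ℕ → Finset V) (hG0 : G 0 = ∅)
    (hstep : ∀ n < k, ∃ i ∉ G n, G (n+1) = insert i (G n) ∧
      ∀ j ∉ G n, U (insert j (G n)) - U (G n) ≤ U (insert i (G n)) - U (G n)) :
    ∀ T : Finset V, T.card ≤ k →
      (1 - (1 - 1/(k:ℝ))^k) * U T ≤ U (G k) ∧
      (1 - Real.exp (-1)) * U T ≤ U (G k) :=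
  greedy_submodular_guarantee_general U hU0 hmono hsub k hk G hG0 hstep
end

section
/- Curvature-aware greedy guarantee: for a monotone submodular function U with U(∅) = 0 and total curvature κ ∈ (0,1], greedy selection of k elements satisfies U(S_greedy) ≥ (1/κ)(1 - (1 - κ/k)^k) · max_{|S|≤k} U(S) ≥ ((1 - e^{-κ})/κ) · max_{|S|≤k} U(S). -/
/-!
Fix `T` with `|T| ≤ k` and follow the gap `D = U (G n ∪ T) - U (G n)` against the budget
`r = |T \ G n|`. By diminishing returns the next greedy gain `σ` is at least `D / r`. If the
greedy element lies in `T`, the gap drops by exactly `σ` and the budget by one; otherwise the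
budget stays, and since that element still gains at least `(1 - κ) σ` on top of `G n ∪ T`, the
gap drops by at most `κ σ`. Induction on the number `j` of remaining steps gives
`(1 - (1 - κ/r)^j) D ≤ κ (U (G (n + j)) - U (G n))`; the budget-shrinking case reduces to
`m (1 - κ/m)^j + (1 - κ) ≤ (m + 1) (1 - κ/(m + 1))^(j + 1)`. Finally take `n = 0`, `j = r = k`
and use `(1 - κ/k)^k ≤ exp (-κ)`.
-/

lemma one_sub_le_one_sub_div_pow {κ m : ℝ} {j : ℕ} (hκ0 : 0 ≤ κ) (hκ1 : κ ≤ 1)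
    (hjm : (j : ℝ) ≤ m) : 1 - κ ≤ (1 - κ / m) ^ j := by
  rcases j.eq_zero_or_pos with rfl | hj
  · simpa using hκ0
  have hm : 1 ≤ m := le_trans (by exact_mod_cast hj) hjm
  have hjκ : (j : ℝ) * (κ / m) ≤ κ := by
    rw [mul_div_left_comm]
    exact mul_le_of_le_one_right hκ0 (div_le_one_of_le₀ hjm (by linarith))
  have hbern := one_add_mul_le_pow (a := -(κ / m)) (by
    have : κ / m ≤ 1 := div_le_one_of_le₀ (hκ1.trans hm) (by linarith)
    linarith) j
  rw [← sub_eq_add_neg] at hbern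
  linarith

lemma mul_one_sub_div_pow_add_le {κ m : ℝ} {j : ℕ} (hκ0 : 0 ≤ κ) (hκ1 : κ ≤ 1)
    (hjm : (j : ℝ) ≤ m) :
    m * (1 - κ / m) ^ j + (1 - κ) ≤ (m + 1) * (1 - κ / (m + 1)) ^ (j + 1) := by
  have hm : 0 ≤ m := le_trans (Nat.cast_nonneg j) hjm
  induction j with
  | zero =>
    rw [pow_zero, pow_one, mul_one_sub, mul_div_cancel₀ _ (by positivity)]
    linarith
  | succ j ih =>
    push_cast at hjm
    have hm1 : 1 ≤ m := by linarith [(Nat.cast_nonneg j : (0 : ℝ) ≤ j)]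
    set a := κ / (m + 1)
    set p := (1 - κ / m) ^ j
    have ha : 0 ≤ 1 - a := by
      rw [sub_nonneg]; exact div_le_one_of_le₀ (by linarith) (by linarith)
    -- `m (κ/m - a) = a`
    have hgap : m * (1 - κ / m) ^ (j + 1) + (1 - κ) + a * (p - (1 - κ))
        = (1 - a) * (m * p + (1 - κ)) := by
      simp only [p, a, pow_succ]; field_simp; ring
    have hp : 0 ≤ a * (p - (1 - κ)) :=
      mul_nonneg (by positivity) (sub_nonneg.2 (one_sub_le_one_sub_div_pow hκ0 hκ1 (by linarith)))
    calc m * (1 - κ / m) ^ (j + 1) + (1 - κ)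
        ≤ (1 - a) * (m * p + (1 - κ)) := by linarith
      _ ≤ (1 - a) * ((m + 1) * (1 - a) ^ (j + 1)) := by gcongr; exact ih (by linarith)
      _ = (m + 1) * (1 - a) ^ (j + 1 + 1) := by ring

lemma greedy_step_of_budget_stays {κ r D D' σ Z : ℝ} {j : ℕ} (hr : 0 < r) (hκ0 : 0 ≤ κ)
    (hκr : κ ≤ r) (hD : D ≤ r * σ) (hD' : D - κ * σ ≤ D')
    (ih : (1 - (1 - κ / r) ^ j) * D' ≤ κ * Z) :
    (1 - (1 - κ / r) ^ (j + 1)) * D ≤ κ * (Z + σ) := by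
  set q := 1 - κ / r
  have hq0 : 0 ≤ q := sub_nonneg.2 (div_le_one_of_le₀ hκr hr.le)
  have hq1 : q ≤ 1 := sub_le_self 1 (div_nonneg hκ0 hr.le)
  have hqj : 0 ≤ 1 - q ^ j := sub_nonneg.2 (pow_le_one₀ hq0 hq1)
  have hgain : (1 - q) * D ≤ κ * σ := by
    rw [show 1 - q = κ / r by ring, div_mul_eq_mul_div, div_le_iff₀ hr]
    linarith [mul_le_mul_of_nonneg_left hD hκ0]
  have := mul_le_mul_of_nonneg_left hD' hqj
  have := mul_le_mul_of_nonneg_left hgain (pow_nonneg hq0 j)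
  rw [pow_succ]
  linarith

lemma greedy_step_of_budget_shrinks {κ m D σ Z : ℝ} {j : ℕ} (hκ0 : 0 ≤ κ) (hκ1 : κ ≤ 1)
    (hjm : (j : ℝ) ≤ m) (hD0 : 0 ≤ D) (hD : D ≤ (m + 1) * σ)
    (ih : (1 - (1 - κ / m) ^ j) * (D - σ) ≤ κ * Z) :
    (1 - (1 - κ / (m + 1)) ^ (j + 1)) * D ≤ κ * (Z + σ) := by
  set p := (1 - κ / m) ^ j
  set Q := (1 - κ / (m + 1)) ^ (j + 1)
  have hm : 0 < m + 1 := by linarith [(Nat.cast_nonneg j : (0 : ℝ) ≤ j)]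
  have hp : 0 ≤ p - (1 - κ) := sub_nonneg.2 (one_sub_le_one_sub_div_pow hκ0 hκ1 hjm)
  have hpQ : (m + 1) * (p - Q) ≤ p - (1 - κ) := by
    linarith [mul_one_sub_div_pow_add_le hκ0 hκ1 hjm]
  have key : (m + 1) * ((p - Q) * D) ≤ (m + 1) * ((p - (1 - κ)) * σ) :=
    calc (m + 1) * ((p - Q) * D) ≤ (p - (1 - κ)) * D := by
          rw [← mul_assoc]; exact mul_le_mul_of_nonneg_right hpQ hD0
      _ ≤ (p - (1 - κ)) * ((m + 1) * σ) := mul_le_mul_of_nonneg_left hD hp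
      _ = (m + 1) * ((p - (1 - κ)) * σ) := by ring
  have := le_of_mul_le_mul_left key hm
  linarith

open Finset

section SetFunction

variable {V : Type*} [DecidableEq V] {U : Finset V → ℝ}

def HasDiminishingReturns (U : Finset V → ℝ) : Prop :=
  ∀ (S T : Finset V) (i : V), S ⊆ T → i ∉ T → U (insert i T) - U T ≤ U (insert i S) - U S

def IsGreedySequence (U : Finset V → ℝ) (k : ℕ) (G : ℕ → Finset V) : Prop :=
  ∀ n < k, ∃ i ∉ G n, G (n + 1) = insert i (G n) ∧
    ∀ j ∉ G n, U (insert j (G n)) - U (G n) ≤ U (insert i (G n)) - U (G n)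

lemma sub_le_card_sdiff_mul_of_marginal_le
    (hsub : HasDiminishingReturns U)
    {A : Finset V} {σ : ℝ} (hσ : ∀ x ∉ A, U (insert x A) - U A ≤ σ) (B : Finset V) :
    U (A ∪ B) - U A ≤ #(B \ A) * σ := by
  induction B using Finset.induction_on with
  | empty => simp
  | @insert x B hxB ih =>
    rw [union_insert]
    by_cases hxA : x ∈ A
    · rwa [insert_eq_of_mem (mem_union_left B hxA), insert_sdiff_of_mem B hxA]
    · have hx : x ∉ A ∪ B := by simp [hxA, hxB]
      rw [insert_sdiff_of_notMem B hxA, card_insert_of_notMem (by simp [hxB])]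
      have := hsub A (A ∪ B) x subset_union_left hx
      push_cast
      linarith [hσ x hxA]

lemma marginal_le_singleton (hU0 : U ∅ = 0)
    (hsub : HasDiminishingReturns U)
    {i : V} {S : Finset V} (hi : i ∉ S) : U (insert i S) - U S ≤ U {i} := by
  simpa [hU0] using hsub ∅ S i (empty_subset S) hi

lemma one_sub_mul_singleton_le_marginal [Fintype V] {κ : ℝ} (hU0 : U ∅ = 0)
    (hmono : Monotone U)
    (hsub : HasDiminishingReturns U)
    (hκ : 1 - κ ∈ lowerBounds
      ((fun i => (U univ - U (univ.erase i)) / U {i}) '' {i : V | 0 < U {i}}))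
    {i : V} {S : Finset V} (hi : i ∉ S) : (1 - κ) * U {i} ≤ U (insert i S) - U S := by
  have hlast : U univ - U (univ.erase i) ≤ U (insert i S) - U S := by
    simpa [insert_erase (mem_univ i)] using
      hsub S (univ.erase i) i (subset_erase.2 ⟨subset_univ S, hi⟩) (notMem_erase i univ)
  rcases (hU0 ▸ hmono (empty_subset {i})).lt_or_eq with hpos | hzero
  · calc (1 - κ) * U {i} ≤ (U univ - U (univ.erase i)) / U {i} * U {i} :=
          mul_le_mul_of_nonneg_right (hκ ⟨i, hpos, rfl⟩) hpos.le
      _ = U univ - U (univ.erase i) := div_mul_cancel₀ _ hpos.ne'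
      _ ≤ U (insert i S) - U S := hlast
  · rw [← hzero, mul_zero, sub_nonneg]
    exact hmono (subset_insert i S)

lemma IsGreedySequence.sub_le_card_mul_gain {k n : ℕ} {G : ℕ → Finset V}
    (hG : IsGreedySequence U k G) (hsub : HasDiminishingReturns U) (hn : n < k)
    (T : Finset V) : U (G n ∪ T) - U (G n) ≤ #(T \ G n) * (U (G (n + 1)) - U (G n)) := by
  obtain ⟨i, -, hGi, hgreedy⟩ := hG n hn
  exact sub_le_card_sdiff_mul_of_marginal_le hsub (fun x hx => hGi ▸ hgreedy x hx) T

theorem IsGreedySequence.gain_bound {k : ℕ} {G : ℕ → Finset V} {κ : ℝ}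
    (hG : IsGreedySequence U k G) (hU0 : U ∅ = 0)
    (hmono : Monotone U)
    (hsub : HasDiminishingReturns U)
    (hcurv : ∀ (i : V) (S : Finset V), i ∉ S → (1 - κ) * U {i} ≤ U (insert i S) - U S)
    (hκ0 : 0 ≤ κ) (hκ1 : κ ≤ 1) (T : Finset V) :
    ∀ j n r : ℕ, n + j ≤ k → j ≤ r → #(T \ G n) ≤ r →
      (1 - (1 - κ / r) ^ j) * (U (G n ∪ T) - U (G n)) ≤ κ * (U (G (n + j)) - U (G n)) := by
  intro j
  induction j with
  | zero => intros; simp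
  | succ j ih =>
    intro n r hnj hjr hTr
    obtain ⟨i, hiG, hGi, -⟩ := hG n (by omega)
    set σ := U (G (n + 1)) - U (G n)
    have hσ : σ = U (insert i (G n)) - U (G n) := by simp only [σ, hGi]
    have hσ0 : 0 ≤ σ := by rw [hσ, sub_nonneg]; exact hmono (subset_insert i (G n))
    have hD0 : 0 ≤ U (G n ∪ T) - U (G n) := sub_nonneg.2 (hmono subset_union_left)
    have hD : U (G n ∪ T) - U (G n) ≤ r * σ :=
      (hG.sub_le_card_mul_gain hsub (by omega) T).trans
        (mul_le_mul_of_nonneg_right (by exact_mod_cast hTr) hσ0)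
    rw [show U (G (n + (j + 1))) - U (G n) = U (G (n + 1 + j)) - U (G (n + 1)) + σ by
      rw [show n + (j + 1) = n + 1 + j by omega]; simp only [σ]; ring]
    by_cases hiT : i ∈ T
    · obtain ⟨m, rfl⟩ : ∃ m, r = m + 1 := ⟨r - 1, by omega⟩
      have hTm : #(T \ G (n + 1)) ≤ m := by
        rw [hGi, sdiff_insert, card_erase_of_mem (mem_sdiff.2 ⟨hiT, hiG⟩)]
        omega
      have hstep := ih (n + 1) m (by omega) (by omega) hTm
      rw [hGi, insert_union, insert_eq_of_mem (mem_union_right _ hiT), ← hGi] at hstep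
      push_cast at hD ⊢
      exact greedy_step_of_budget_shrinks hκ0 hκ1 (by exact_mod_cast (show j ≤ m by omega))
        hD0 hD (by convert hstep using 2; ring)
    · have hTr' : #(T \ G (n + 1)) ≤ r := by
        rwa [hGi, sdiff_insert, erase_eq_of_notMem (fun h => hiT (mem_sdiff.1 h).1)]
      have hiGT : i ∉ G n ∪ T := by simp [hiG, hiT]
      have hD' : U (G n ∪ T) - U (G n) - κ * σ ≤ U (G (n + 1) ∪ T) - U (G (n + 1)) := by
        have hcost := hcurv i _ hiGT
        have hσi : σ ≤ U {i} := hσ ▸ marginal_le_singleton hU0 hsub hiG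
        rw [hGi, insert_union, ← hGi]
        linarith [mul_le_mul_of_nonneg_left hσi (sub_nonneg.2 hκ1)]
      exact greedy_step_of_budget_stays (by exact_mod_cast (show 0 < r by omega)) hκ0
        (hκ1.trans (by exact_mod_cast (show 1 ≤ r by omega))) hD hD'
        (ih (n + 1) r (by omega) (by omega) hTr')

end SetFunction

theorem greedy_curvature_guarantee_general {V : Type*} [Fintype V] [DecidableEq V]
    (U : Finset V → ℝ) (hU0 : U ∅ = 0)
    (hmono : ∀ S T : Finset V, S ⊆ T → U S ≤ U T)
    (hsub : ∀ (S T : Finset V) (i : V), S ⊆ T → i ∉ T →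
      U (insert i T) - U T ≤ U (insert i S) - U S)
    (κ : ℝ) (hκ : κ ∈ Set.Ioc (0:ℝ) 1)
    (hκdef : IsLeast
      ((fun i => (U Finset.univ - U (Finset.univ.erase i)) / U {i}) ''
        {i : V | 0 < U {i}}) (1 - κ))
    (k : ℕ) (hk : 1 ≤ k)
    (G : ℕ → Finset V) (hG0 : G 0 = ∅)
    (hstep : ∀ n < k, ∃ i ∉ G n, G (n+1) = insert i (G n) ∧
      ∀ j ∉ G n, U (insert j (G n)) - U (G n) ≤ U (insert i (G n)) - U (G n)) :
    ∀ T : Finset V, T.card ≤ k →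
      (1/κ) * (1 - (1 - κ/(k:ℝ))^k) * U T ≤ U (G k) ∧
      ((1 - Real.exp (-κ))/κ) * U T ≤ U (G k) := by
  obtain ⟨hκ0, hκ1⟩ := hκ
  intro T hT
  have hcurv (i : V) (S : Finset V) (hi : i ∉ S) :=
    one_sub_mul_singleton_le_marginal hU0 hmono hsub hκdef.2 hi
  have hgain := IsGreedySequence.gain_bound hstep hU0 hmono hsub hcurv hκ0.le hκ1 T k 0 k
    (by omega) le_rfl (by simpa [hG0] using hT)
  simp only [hG0, hU0, empty_union, sub_zero, zero_add] at hgain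
  have hfirst : 1 / κ * (1 - (1 - κ / k) ^ k) * U T ≤ U (G k) := by
    rwa [mul_assoc, one_div, inv_mul_le_iff₀ hκ0]
  refine ⟨hfirst, le_trans ?_ hfirst⟩
  have hUT : 0 ≤ U T := hU0 ▸ hmono ∅ T (empty_subset T)
  have hexp : (1 - κ / k) ^ k ≤ Real.exp (-κ) :=
    Real.one_sub_div_pow_le_exp_neg (hκ1.trans (by exact_mod_cast hk))
  rw [div_eq_inv_mul, ← one_div]
  gcongr

/-- Curvature-aware greedy guarantee: for a monotone submodular `U` with `U ∅ = 0`
and total curvature `κ = 1 - min_{i : U {i} > 0} (U(V) - U(V \ {i})) / U {i}` in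
`(0,1]`, greedy selection of `k` elements attains at least
`(1/κ)(1 - (1 - κ/k)^k) ≥ (1 - e^{-κ})/κ` times the optimum over sets of size ≤ k. -/
theorem greedy_curvature_guarantee {V : Type*} [Fintype V] [DecidableEq V]
    (U : Finset V → ℝ) (hU0 : U ∅ = 0)
    (hmono : ∀ S T : Finset V, S ⊆ T → U S ≤ U T)
    (hsub : ∀ (S T : Finset V) (i : V), S ⊆ T → i ∉ T →
      U (insert i T) - U T ≤ U (insert i S) - U S)
    (κ : ℝ) (hκ : κ ∈ Set.Ioc (0:ℝ) 1)
    (hκdef : IsLeast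
      ((fun i => (U Finset.univ - U (Finset.univ.erase i)) / U {i}) ''
        {i : V | 0 < U {i}}) (1 - κ))
    (k : ℕ) (hk : 1 ≤ k) (hkV : k ≤ Fintype.card V)
    (G : ℕ → Finset V) (hG0 : G 0 = ∅)
    (hstep : ∀ n < k, ∃ i ∉ G n, G (n+1) = insert i (G n) ∧
      ∀ j ∉ G n, U (insert j (G n)) - U (G n) ≤ U (insert i (G n)) - U (G n)) :
    ∀ T : Finset V, T.card ≤ k →
      (1/κ) * (1 - (1 - κ/(k:ℝ))^k) * U T ≤ U (G k) ∧
      ((1 - Real.exp (-κ))/κ) * U T ≤ U (G k) :=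
  greedy_curvature_guarantee_general U hU0 hmono hsub κ hκ hκdef k hk G hG0 hstep
end
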